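/- arXiv:2111.02128 — 3 statements merged into one kernel-verified Lean document; each statement's English description precedes it below -/
import Mathlib

section
/- Let n be a positive natural number, let x ∈ ℂ^n with ‖x‖² = T for some real T > 0, let α ∈ (0,1], and let ẑ be an integrable ℂ^n-valued random vector with 𝔼[‖ẑ‖²] = T and 𝔼[ẑ] = α·x. Define ξ = 𝔼[‖ẑ − α·x‖²]/(T·α²). Then the mean square error satisfies (1/T)·𝔼[‖ẑ − x‖²] = 2·(1 − α) = 2·(1 − (1 + ξ)^{-1/2}). -/
open MeasureTheory

/-- For an integrable `ℂ^n`-valued estimator `z` of a vector `x` on the sphere of radius `√T`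
satisfying the norm constraint `𝔼[‖z‖²] = T` and the bias relation `𝔼[z] = α • x` with
`α ∈ (0,1]`, letting `ξ = 𝔼[‖z − α x‖²]/(T α²)` be the normalized variance, the mean square
error satisfies `(1/T) 𝔼[‖z − x‖²] = 2(1 − α) = 2(1 − (1+ξ)^{-1/2})`. -/
theorem stmt_2 {Ω : Type*} [MeasureSpace Ω] [IsProbabilityMeasure (volume : Measure Ω)]
    {n : ℕ} (hn : 0 < n) (T : ℝ) (hT : 0 < T)
    (x : EuclideanSpace ℂ (Fin n)) (hx : ‖x‖ ^ 2 = T)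
    (α : ℝ) (hα : α ∈ Set.Ioc (0 : ℝ) 1)
    (z : Ω → EuclideanSpace ℂ (Fin n))
    (hz : Integrable z) (hz2 : Integrable (fun ω => ‖z ω‖ ^ 2))
    (hnorm : ∫ ω, ‖z ω‖ ^ 2 = T)
    (hbias : ∫ ω, z ω = α • x)
    (ξ : ℝ) (hξ : ξ = (∫ ω, ‖z ω - α • x‖ ^ 2) / (T * α ^ 2)) :
    (1 / T) * ∫ ω, ‖z ω - x‖ ^ 2 = 2 * (1 - α) ∧
      (1 / T) * ∫ ω, ‖z ω - x‖ ^ 2 = 2 * (1 - (1 + ξ) ^ (-(1 / 2 : ℝ))) := by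
  obtain ⟨hα0, hα1⟩ := hα
  set L : EuclideanSpace ℂ (Fin n) →L[ℝ] ℝ :=
    Complex.reCLM.comp ((innerSL ℂ x).restrictScalars ℝ) with hLdef
  have hLapp : ∀ v, L v = RCLike.re (inner ℂ x v) := fun v => rfl
  have hLz : Integrable (fun ω => L (z ω)) := L.integrable_comp hz
  have hLx : L (α • x) = α * T := by
    rw [hLapp, RCLike.real_smul_eq_coe_smul (K := ℂ), inner_smul_right,
      ← RCLike.real_smul_eq_coe_mul, RCLike.smul_re, inner_self_eq_norm_sq, hx]
  have hInt : ∫ ω, L (z ω) = α * T := by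
    rw [L.integral_comp_comm hz, hbias, hLx]
  have hmain : ∫ ω, ‖z ω - x‖ ^ 2 = 2 * T * (1 - α) := by
    have hpt : ∀ ω, ‖z ω - x‖ ^ 2 = ‖z ω‖ ^ 2 - 2 * L (z ω) + T := by
      intro ω
      rw [norm_sub_sq (𝕜 := ℂ), hx, hLapp, inner_re_symm]
    simp_rw [hpt]
    rw [integral_add (μ := volume) (show Integrable (fun ω => ‖z ω‖ ^ 2 - 2 * L (z ω)) from
        hz2.sub (hLz.const_mul 2)) (integrable_const T),
      integral_sub hz2 (hLz.const_mul 2), integral_const_mul, hnorm, hInt,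
      integral_const]
    simp [measure_univ]
    ring
  have hsub : ∫ ω, ‖z ω - α • x‖ ^ 2 = T * (1 - α ^ 2) := by
    have hpt : ∀ ω, ‖z ω - α • x‖ ^ 2 = ‖z ω‖ ^ 2 - 2 * (α * L (z ω)) + α ^ 2 * T := by
      intro ω
      rw [norm_sub_sq (𝕜 := ℂ), inner_re_symm, RCLike.real_smul_eq_coe_smul (K := ℂ),
        inner_smul_left, norm_smul]
      simp [hLapp, ← hx, RCLike.smul_re, ← RCLike.real_smul_eq_coe_mul]
      rw [abs_of_pos hα0]
      ring
    simp_rw [hpt]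
    rw [integral_add (μ := volume) (show Integrable (fun ω => ‖z ω‖ ^ 2 - 2 * (α * L (z ω))) from
        hz2.sub ((hLz.const_mul α).const_mul 2)) (integrable_const _),
      integral_sub hz2 ((hLz.const_mul α).const_mul 2), integral_const_mul,
      integral_const_mul, hnorm, hInt, integral_const]
    simp [measure_univ]
    ring
  have h1ξ : 1 + ξ = (α ^ 2)⁻¹ := by
    rw [hξ, hsub]
    field_simp
    ring
  have hrpow : (1 + ξ) ^ (-(1 / 2 : ℝ)) = α := by
    rw [h1ξ]
    have h2 : (α ^ 2 : ℝ) = α ^ (2 : ℝ) := by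
      rw [← Real.rpow_natCast α 2]; norm_num
    rw [h2, ← Real.rpow_neg hα0.le, ← Real.rpow_mul hα0.le]
    norm_num
  constructor
  · rw [hmain]; field_simp
  · rw [hmain, hrpow]; field_simp
end

section
/- Let n be a positive natural number, let x ∈ ℂ^n with ‖x‖² = T for some real T > 0, let α ∈ (0,1], and let ẑ be an integrable ℂ^n-valued random vector with 𝔼[‖ẑ‖²] = T and 𝔼[ẑ] = α·x. Define ξ = 𝔼[‖ẑ − α·x‖²]/(T·α²), and suppose ξ ≥ ξ* for some real ξ* ≥ 0. Then the mean square error is lower bounded as (1/T)·𝔼[‖ẑ − x‖²] ≥ 2·(1 − (1 + ξ*)^{-1/2}). -/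
open MeasureTheory RCLike

open scoped ComplexInnerProductSpace

/-- For an integrable `ℂ^n`-valued estimator `z` of a vector `x` on the sphere of radius `√T`
satisfying the norm constraint `𝔼[‖z‖²] = T` and the bias relation `𝔼[z] = α • x` with
`α ∈ (0,1]`, if the normalized variance `ξ = 𝔼[‖z − α x‖²]/(T α²)` is lower bounded by
`ξ* ≥ 0`, then the mean square error is lower bounded as
`(1/T) 𝔼[‖z − x‖²] ≥ 2(1 − (1+ξ*)^{-1/2})`. -/
theorem stmt_3 {Ω : Type*} [MeasureSpace Ω] [IsProbabilityMeasure (volume : Measure Ω)]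
    {n : ℕ} (hn : 0 < n) (T : ℝ) (hT : 0 < T)
    (x : EuclideanSpace ℂ (Fin n)) (hx : ‖x‖ ^ 2 = T)
    (α : ℝ) (hα : α ∈ Set.Ioc (0 : ℝ) 1)
    (z : Ω → EuclideanSpace ℂ (Fin n))
    (hz : Integrable z) (hz2 : Integrable (fun ω => ‖z ω‖ ^ 2))
    (hnorm : ∫ ω, ‖z ω‖ ^ 2 = T)
    (hbias : ∫ ω, z ω = α • x)
    (ξ : ℝ) (hξ : ξ = (∫ ω, ‖z ω - α • x‖ ^ 2) / (T * α ^ 2))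
    (ξstar : ℝ) (hξstar : 0 ≤ ξstar) (hlb : ξstar ≤ ξ) :
    (1 / T) * ∫ ω, ‖z ω - x‖ ^ 2 ≥ 2 * (1 - (1 + ξstar) ^ (-(1 / 2 : ℝ))) := by
  obtain ⟨hα0, hα1⟩ := hα
  have hinner : Integrable (fun ω => ⟪x, z ω⟫) := hz.const_inner x
  have hre : Integrable (fun ω => re ⟪x, z ω⟫) := hinner.re
  have hsmul : (α : ℂ) • x = α • x := by
    simp [Complex.coe_smul]
  have hxx : re ⟪x, x⟫ = ‖x‖ ^ 2 := inner_self_eq_norm_sq (𝕜 := ℂ) x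
  have hI : ∫ ω, re ⟪x, z ω⟫ = α * T := by
    rw [integral_re hinner, integral_inner hz x, hbias, ← hsmul, inner_smul_right]
    simp only [RCLike.re_to_complex, Complex.mul_re, Complex.ofReal_re, Complex.ofReal_im,
      zero_mul, sub_zero]
    rw [show (⟪x, x⟫ : ℂ).re = re ⟪x, x⟫ from rfl, hxx, hx]
  have e1 : ∫ ω, ‖z ω - x‖ ^ 2 = 2 * T - 2 * (α * T) := by
    have hfun : (fun ω => ‖z ω - x‖ ^ 2)
        = fun ω => ‖z ω‖ ^ 2 - 2 * re ⟪x, z ω⟫ + ‖x‖ ^ 2 := by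
      funext ω
      rw [@norm_sub_sq ℂ, inner_re_symm]
    have ha : Integrable (fun ω => ‖z ω‖ ^ 2 - 2 * re ⟪x, z ω⟫) := hz2.sub (hre.const_mul 2)
    rw [hfun, integral_add ha (integrable_const _),
      integral_sub hz2 (hre.const_mul 2), integral_const_mul, hnorm, hI, integral_const]
    simp only [measure_univ, ENNReal.toReal_one, probReal_univ, one_smul, hx]
    ring
  have e2 : ∫ ω, ‖z ω - α • x‖ ^ 2 = T - α ^ 2 * T := by
    have hfun : (fun ω => ‖z ω - α • x‖ ^ 2)
        = fun ω => ‖z ω‖ ^ 2 - 2 * (α * re ⟪x, z ω⟫) + α ^ 2 * T := by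
      funext ω
      rw [@norm_sub_sq ℂ, inner_re_symm, ← hsmul, inner_smul_left, Complex.conj_ofReal,
        norm_smul]
      simp only [RCLike.re_to_complex, Complex.mul_re, Complex.ofReal_re, Complex.ofReal_im,
        zero_mul, sub_zero, Complex.norm_real]
      rw [mul_pow, ← hx, Real.norm_eq_abs, abs_of_pos hα0]
    have ha : Integrable (fun ω => ‖z ω‖ ^ 2 - 2 * (α * re ⟪x, z ω⟫)) :=
      hz2.sub ((hre.const_mul α).const_mul 2)
    rw [hfun, integral_add ha (integrable_const _),
      integral_sub hz2 ((hre.const_mul α).const_mul 2), integral_const_mul, integral_const_mul,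
      hnorm, hI, integral_const]
    simp only [measure_univ, ENNReal.toReal_one, probReal_univ, one_smul]
    ring
  have hξval : ξ = (1 - α ^ 2) / α ^ 2 := by
    rw [hξ, e2, show T - α ^ 2 * T = T * (1 - α ^ 2) by ring,
      mul_div_mul_left _ _ (ne_of_gt hT)]
  have h1ξ : 1 + ξ = (α ^ 2)⁻¹ := by
    rw [hξval, ← one_div, eq_div_iff (by positivity), add_mul, div_mul_cancel₀ _ (by positivity)]
    ring
  have hαle : α ≤ (1 + ξstar) ^ (-(1 / 2 : ℝ)) := by
    have h1 : (0 : ℝ) < 1 + ξstar := by linarith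
    have h2 : 1 + ξstar ≤ (α ^ 2)⁻¹ := by rw [← h1ξ]; linarith
    have h3 : ((α ^ 2)⁻¹ : ℝ) ^ (-(1 / 2 : ℝ)) ≤ (1 + ξstar) ^ (-(1 / 2 : ℝ)) :=
      Real.rpow_le_rpow_of_nonpos h1 h2 (by norm_num)
    have h5 : ((α ^ 2 : ℝ)) ^ ((1 : ℝ) / 2) = α := by
      rw [← Real.rpow_natCast α 2, ← Real.rpow_mul hα0.le]
      norm_num
    have h4 : ((α ^ 2)⁻¹ : ℝ) ^ (-(1 / 2 : ℝ)) = α := by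
      rw [Real.inv_rpow (by positivity), Real.rpow_neg (by positivity), inv_inv, h5]
    linarith
  rw [e1, show 2 * T - 2 * (α * T) = T * (2 * (1 - α)) by ring,
    one_div, inv_mul_cancel_left₀ (ne_of_gt hT)]
  nlinarith
end

section
/- Let n be a positive natural number, let T > 0, α ∈ ℝ, γ > 0 be reals, let z ∈ ℂ^n, and let C₁ and C₀ be finite sets of vectors in ℂ^n, each element x satisfying ‖x‖² = T, with C₀ nonempty. Define g(t) = ∫₀^{2π} exp(2·γ·α·t·cos φ) dφ for t ≥ 0. Then (Σ_{x ∈ C₁} ∫₀^{2π} exp(−γ·‖z − α·e^{iφ}·x‖²) dφ) / (Σ_{x ∈ C₀} ∫₀^{2π} exp(−γ·‖z − α·e^{iφ}·x‖²) dφ) = (Σ_{x ∈ C₁} g(|x^H z|)) / (Σ_{x ∈ C₀} g(|x^H z|)). -/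
/-- The phase-marginalized likelihood ratio of two constellation subsets `C₁, C₀` (all of
whose elements lie on the sphere of radius `√T`) equals the corresponding ratio of sums of
`g(|xᴴz|)`, where `g(t) = ∫₀^{2π} exp(2γαt cos φ) dφ`. -/
theorem stmt_13 {n : ℕ} (hn : 0 < n) (T : ℝ) (hT : 0 < T) (α γ : ℝ) (hγ : 0 < γ)
    (z : EuclideanSpace ℂ (Fin n))
    (C₁ C₀ : Finset (EuclideanSpace ℂ (Fin n)))
    (hC₁ : ∀ x ∈ C₁, ‖x‖ ^ 2 = T) (hC₀ : ∀ x ∈ C₀, ‖x‖ ^ 2 = T)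
    (hne : C₀.Nonempty)
    (g : ℝ → ℝ)
    (hg : ∀ t : ℝ, 0 ≤ t →
      g t = ∫ φ in (0 : ℝ)..(2 * Real.pi), Real.exp (2 * γ * α * t * Real.cos φ)) :
    (∑ x ∈ C₁, ∫ φ in (0 : ℝ)..(2 * Real.pi),
        Real.exp (-γ * ‖z - Complex.exp (Complex.I * (φ : ℂ)) • (α • x)‖ ^ 2)) /
      (∑ x ∈ C₀, ∫ φ in (0 : ℝ)..(2 * Real.pi),
        Real.exp (-γ * ‖z - Complex.exp (Complex.I * (φ : ℂ)) • (α • x)‖ ^ 2))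
    = (∑ x ∈ C₁, g ‖(inner ℂ x z : ℂ)‖) /
      (∑ x ∈ C₀, g ‖(inner ℂ x z : ℂ)‖) := by
  set c := Real.exp (-γ * (‖z‖ ^ 2 + α ^ 2 * T)) with hc
  have key : ∀ x : EuclideanSpace ℂ (Fin n), ‖x‖ ^ 2 = T →
      (∫ φ in (0 : ℝ)..(2 * Real.pi),
        Real.exp (-γ * ‖z - Complex.exp (Complex.I * (φ : ℂ)) • (α • x)‖ ^ 2))
      = c * g ‖(inner ℂ x z : ℂ)‖ := by
    intro x hx
    set w : ℂ := (inner ℂ z x : ℂ) with hw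
    have habs : ‖(inner ℂ x z : ℂ)‖ = ‖w‖ := by
      rw [hw, ← inner_conj_symm x z, Complex.norm_conj]
    set r : ℝ := ‖w‖ with hr
    set θ : ℝ := Complex.arg w with hθ
    -- pointwise rewrite of the integrand
    have hpt : ∀ φ : ℝ,
        Real.exp (-γ * ‖z - Complex.exp (Complex.I * (φ : ℂ)) • (α • x)‖ ^ 2)
        = c * Real.exp (2 * γ * α * r * Real.cos (φ + θ)) := by
      intro φ
      have hsm : ((α : ℝ) • x) = ((α : ℂ) • x) := by
        ext i; simp [Complex.real_smul]
      have hinner : (inner ℂ z (Complex.exp (Complex.I * (φ : ℂ)) • (α • x)) : ℂ)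
          = Complex.exp (Complex.I * (φ : ℂ)) * ((α : ℂ) * w) := by
        rw [inner_smul_right, hsm, inner_smul_right, hw]
      have hre : (Complex.exp (Complex.I * (φ : ℂ)) * w).re = r * Real.cos (φ + θ) := by
        have h : Complex.exp (Complex.I * (φ : ℂ)) * w
            = (r : ℂ) * Complex.exp ((↑(φ + θ)) * Complex.I) := by
          conv_lhs => rw [← Complex.norm_mul_exp_arg_mul_I w]
          rw [mul_comm Complex.I, mul_left_comm, ← Complex.exp_add]
          push_cast
          ring_nf
          rw [hr, hθ]
        rw [h, Complex.re_ofReal_mul, Complex.exp_ofReal_mul_I_re]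
      have hnsm : ‖Complex.exp (Complex.I * (φ : ℂ)) • (α • x)‖ ^ 2 = α ^ 2 * T := by
        rw [norm_smul, norm_smul]
        have : ‖Complex.exp (Complex.I * (φ : ℂ))‖ = 1 := by
          rw [Complex.norm_exp]
          simp
        rw [this, one_mul, mul_pow, ← hx]
        simp [Real.norm_eq_abs, sq_abs]
      have hexp : ‖z - Complex.exp (Complex.I * (φ : ℂ)) • (α • x)‖ ^ 2
          = ‖z‖ ^ 2 - 2 * (α * (r * Real.cos (φ + θ))) + α ^ 2 * T := by
        rw [norm_sub_sq (𝕜 := ℂ), hnsm, hinner]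
        have h2 : (Complex.exp (Complex.I * (φ : ℂ)) * ((α : ℂ) * w)).re
            = α * (r * Real.cos (φ + θ)) := by
          rw [mul_left_comm, Complex.re_ofReal_mul, hre]
        simp only [RCLike.re_to_complex, h2]
      rw [hexp, hc, ← Real.exp_add]
      ring_nf
    rw [intervalIntegral.integral_congr (g := fun φ =>
        c * Real.exp (2 * γ * α * r * Real.cos (φ + θ))) (fun φ _ => hpt φ),
      intervalIntegral.integral_const_mul]
    congr 1
    have hper : Function.Periodic (fun ψ => Real.exp (2 * γ * α * r * Real.cos ψ))
        (2 * Real.pi) := fun ψ => by simp [Real.cos_add_two_pi]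
    have hshift : (∫ φ in (0 : ℝ)..(2 * Real.pi),
        Real.exp (2 * γ * α * r * Real.cos (φ + θ)))
        = ∫ ψ in θ..(θ + 2 * Real.pi), Real.exp (2 * γ * α * r * Real.cos ψ) := by
      rw [intervalIntegral.integral_comp_add_right
        (fun ψ => Real.exp (2 * γ * α * r * Real.cos ψ)) θ]
      norm_num [add_comm]
    rw [hshift, hper.intervalIntegral_add_eq θ 0, zero_add, habs,
      hg r (norm_nonneg w)]
  have h1 : (∑ x ∈ C₁, ∫ φ in (0 : ℝ)..(2 * Real.pi),
      Real.exp (-γ * ‖z - Complex.exp (Complex.I * (φ : ℂ)) • (α • x)‖ ^ 2))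
      = c * ∑ x ∈ C₁, g ‖(inner ℂ x z : ℂ)‖ := by
    rw [Finset.mul_sum]
    exact Finset.sum_congr rfl fun x hx => key x (hC₁ x hx)
  have h0 : (∑ x ∈ C₀, ∫ φ in (0 : ℝ)..(2 * Real.pi),
      Real.exp (-γ * ‖z - Complex.exp (Complex.I * (φ : ℂ)) • (α • x)‖ ^ 2))
      = c * ∑ x ∈ C₀, g ‖(inner ℂ x z : ℂ)‖ := by
    rw [Finset.mul_sum]
    exact Finset.sum_congr rfl fun x hx => key x (hC₀ x hx)
  rw [h1, h0, mul_div_mul_left _ _ (Real.exp_ne_zero _)]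
end
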